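/- Let n ≥ 8 be an integer and Φ = 2·cos(π/n). Let x, y be real numbers with x ≥ 0, y > 0, (x − 1/Φ)² + y² ≥ 1/Φ², and y ≥ x − 1/Φ. Then either x ≤ y, or there exists an integer k ≥ 1 with |x − 1/(kΦ)| ≤ y. -/
import Mathlib


/-- `Φ = 2 cos(π/n)`. -/
noncomputable def Phi (n : ℕ) : ℝ := 2 * Real.cos (Real.pi / n)

theorem stmt13 (n : ℕ) (hn : 8 ≤ n) (x y : ℝ)
    (hx : 0 ≤ x) (hy : 0 < y)
    (hcirc : (1 / Phi n) ^ 2 ≤ (x - 1 / Phi n) ^ 2 + y ^ 2)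
    (hline : x - 1 / Phi n ≤ y) :
    x ≤ y ∨ ∃ k : ℕ, 1 ≤ k ∧ |x - 1 / (k * Phi n)| ≤ y := by
  rcases le_or_gt x y with h | h
  · exact Or.inl h
  right
  have hπ := Real.pi_pos
  have hn' : (2:ℝ) < n := by
    have : (8:ℝ) ≤ n := by exact_mod_cast hn
    linarith
  have hcos : 0 < Real.cos (Real.pi / n) := by
    apply Real.cos_pos_of_mem_Ioo
    constructor
    · have : 0 < Real.pi / n := by positivity
      linarith
    · exact div_lt_div_of_pos_left hπ (by norm_num) hn'
  have hΦ : 0 < Phi n := by unfold Phi; positivity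
  have hc : 0 < 1 / Phi n := by positivity
  refine ⟨1, le_refl 1, ?_⟩
  rw [Nat.cast_one, one_mul, abs_le]
  refine ⟨?_, hline⟩
  have hx' : 0 < x := hy.trans h
  nlinarith [hcirc, mul_pos hx' hy, mul_pos (sub_pos.mpr h) (add_pos hx' hy),
    mul_pos hx' hx']
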